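/- arXiv:1705.08393 — 2 statements merged into one kernel-verified Lean document; each statement's English description precedes it below -/
import Mathlib

section
/- If an RUV procedure is simultaneously an instance of RUV2 (estimating α̂ by regressing Y₃ on Ẑ₃, i.e., α̂ = (Ẑ₃^⊤Ẑ₃)^{-1}Ẑ₃^⊤Y₃, with Ẑ₂, Ẑ₃ depending only on (Y₂,𝒞, Y₃,𝒞)) and of RUV4 (estimating Ẑ₂ by generalized least squares Ẑ₂ = Y₂,𝒞 Σ̂_𝒞^{-1} α̂_𝒞^⊤(α̂_𝒞 Σ̂_𝒞^{-1} α̂_𝒞^⊤)^{-1}, with α̂, Ẑ₃, Σ̂ depending only on (Y₃,𝒞, Y₃,𝒞̄)), then the quantities Ẑ₃, α̂_𝒞, and Σ̂_𝒞 are functions of Y₃,𝒞 alone, and the procedure satisfies both the RUV3 regression identities; that is, the procedure is an instance of RUV3. -/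
open Matrix

theorem eq_of_invariant_first_of_invariant_third {α β γ δ : Type*} (f : α → β → γ → δ)
    (h₃ : ∀ a b c c', f a b c = f a b c') (h₁ : ∀ a a' b c, f a b c = f a' b c) :
    ∀ a a' b c c', f a b c = f a' b c' :=
  fun a a' b c c' => (h₃ a b c c').trans (h₁ a a' b c')

theorem ruv2_and_ruv4_implies_ruv3_general
    {k₂ r m s q : ℕ}
    -- the procedure: estimators as functions of (Y₂𝒞, Y₃𝒞, Y₃𝒞̄)
    (Z₂ : Matrix (Fin k₂) (Fin m) ℝ → Matrix (Fin r) (Fin m) ℝ →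
      Matrix (Fin r) (Fin s) ℝ → Matrix (Fin k₂) (Fin q) ℝ)
    (Z₃ : Matrix (Fin k₂) (Fin m) ℝ → Matrix (Fin r) (Fin m) ℝ →
      Matrix (Fin r) (Fin s) ℝ → Matrix (Fin r) (Fin q) ℝ)
    (αC : Matrix (Fin k₂) (Fin m) ℝ → Matrix (Fin r) (Fin m) ℝ →
      Matrix (Fin r) (Fin s) ℝ → Matrix (Fin q) (Fin m) ℝ)
    (αCbar : Matrix (Fin k₂) (Fin m) ℝ → Matrix (Fin r) (Fin m) ℝ →
      Matrix (Fin r) (Fin s) ℝ → Matrix (Fin q) (Fin s) ℝ)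
    (SigC : Matrix (Fin k₂) (Fin m) ℝ → Matrix (Fin r) (Fin m) ℝ →
      Matrix (Fin r) (Fin s) ℝ → (Fin m → ℝ))
    -- RUV2: factor-analysis quantities depend only on the control columns (Y₂𝒞, Y₃𝒞)
    (hruv2_Z3 : ∀ a b c c', Z₃ a b c = Z₃ a b c')
    (hruv2_αC : ∀ a b c c', αC a b c = αC a b c')
    (hruv2_SigC : ∀ a b c c', SigC a b c = SigC a b c')
    (hruv2_reg : ∀ a b c,
      αCbar a b c = ((Z₃ a b c)ᵀ * Z₃ a b c)⁻¹ * (Z₃ a b c)ᵀ * c)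
    -- RUV4: factor-analysis quantities depend only on the rotated rows (Y₃𝒞, Y₃𝒞̄)
    (hruv4_Z3 : ∀ a a' b c, Z₃ a b c = Z₃ a' b c)
    (hruv4_αC : ∀ a a' b c, αC a b c = αC a' b c)
    (hruv4_SigC : ∀ a a' b c, SigC a b c = SigC a' b c)
    (hruv4_gls : ∀ a b c,
      Z₂ a b c = a * (Matrix.diagonal (SigC a b c))⁻¹ * (αC a b c)ᵀ *
        (αC a b c * (Matrix.diagonal (SigC a b c))⁻¹ * (αC a b c)ᵀ)⁻¹) :
    -- RUV3: Ẑ₃, α̂𝒞, Σ̂𝒞 are functions of Y₃𝒞 alone, and the two regression identities hold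
    (∀ a a' b c c', Z₃ a b c = Z₃ a' b c') ∧
    (∀ a a' b c c', αC a b c = αC a' b c') ∧
    (∀ a a' b c c', SigC a b c = SigC a' b c') ∧
    (∀ a b c,
      Z₂ a b c = a * (Matrix.diagonal (SigC a b c))⁻¹ * (αC a b c)ᵀ *
        (αC a b c * (Matrix.diagonal (SigC a b c))⁻¹ * (αC a b c)ᵀ)⁻¹) ∧
    (∀ a b c,
      αCbar a b c = ((Z₃ a b c)ᵀ * Z₃ a b c)⁻¹ * (Z₃ a b c)ᵀ * c) :=
  ⟨eq_of_invariant_first_of_invariant_third Z₃ hruv2_Z3 hruv4_Z3,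
    eq_of_invariant_first_of_invariant_third αC hruv2_αC hruv4_αC,
    eq_of_invariant_first_of_invariant_third SigC hruv2_SigC hruv4_SigC,
    hruv4_gls, hruv2_reg⟩

/-- A procedure that is simultaneously an instance of RUV2 and of RUV4 is an instance
of RUV3: its factor-analysis quantities `Ẑ₃, α̂_𝒞, Σ̂_𝒞` depend on `Y₃,𝒞` alone, `Ẑ₂`
is given by the GLS formula on the controls, and `α̂_𝒞̄` by regression of `Y₃,𝒞̄` on `Ẑ₃`. -/
theorem ruv2_and_ruv4_implies_ruv3
    {k₂ r m s q : ℕ}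
    -- the procedure: estimators as functions of (Y₂𝒞, Y₃𝒞, Y₃𝒞̄)
    (Z₂ : Matrix (Fin k₂) (Fin m) ℝ → Matrix (Fin r) (Fin m) ℝ →
      Matrix (Fin r) (Fin s) ℝ → Matrix (Fin k₂) (Fin q) ℝ)
    (Z₃ : Matrix (Fin k₂) (Fin m) ℝ → Matrix (Fin r) (Fin m) ℝ →
      Matrix (Fin r) (Fin s) ℝ → Matrix (Fin r) (Fin q) ℝ)
    (αC : Matrix (Fin k₂) (Fin m) ℝ → Matrix (Fin r) (Fin m) ℝ →
      Matrix (Fin r) (Fin s) ℝ → Matrix (Fin q) (Fin m) ℝ)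
    (αCbar : Matrix (Fin k₂) (Fin m) ℝ → Matrix (Fin r) (Fin m) ℝ →
      Matrix (Fin r) (Fin s) ℝ → Matrix (Fin q) (Fin s) ℝ)
    (SigC : Matrix (Fin k₂) (Fin m) ℝ → Matrix (Fin r) (Fin m) ℝ →
      Matrix (Fin r) (Fin s) ℝ → (Fin m → ℝ))
    -- RUV2: factor-analysis quantities depend only on the control columns (Y₂𝒞, Y₃𝒞)
    (hruv2_Z2 : ∀ a b c c', Z₂ a b c = Z₂ a b c')
    (hruv2_Z3 : ∀ a b c c', Z₃ a b c = Z₃ a b c')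
    (hruv2_αC : ∀ a b c c', αC a b c = αC a b c')
    (hruv2_SigC : ∀ a b c c', SigC a b c = SigC a b c')
    (hruv2_reg : ∀ a b c,
      αCbar a b c = ((Z₃ a b c)ᵀ * Z₃ a b c)⁻¹ * (Z₃ a b c)ᵀ * c)
    -- RUV4: factor-analysis quantities depend only on the rotated rows (Y₃𝒞, Y₃𝒞̄)
    (hruv4_Z3 : ∀ a a' b c, Z₃ a b c = Z₃ a' b c)
    (hruv4_αC : ∀ a a' b c, αC a b c = αC a' b c)
    (hruv4_αCbar : ∀ a a' b c, αCbar a b c = αCbar a' b c)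
    (hruv4_SigC : ∀ a a' b c, SigC a b c = SigC a' b c)
    (hruv4_gls : ∀ a b c,
      Z₂ a b c = a * (Matrix.diagonal (SigC a b c))⁻¹ * (αC a b c)ᵀ *
        (αC a b c * (Matrix.diagonal (SigC a b c))⁻¹ * (αC a b c)ᵀ)⁻¹) :
    -- RUV3: Ẑ₃, α̂𝒞, Σ̂𝒞 are functions of Y₃𝒞 alone, and the two regression identities hold
    (∀ a a' b c c', Z₃ a b c = Z₃ a' b c') ∧
    (∀ a a' b c c', αC a b c = αC a' b c') ∧
    (∀ a a' b c c', SigC a b c = SigC a' b c') ∧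
    (∀ a b c,
      Z₂ a b c = a * (Matrix.diagonal (SigC a b c))⁻¹ * (αC a b c)ᵀ *
        (αC a b c * (Matrix.diagonal (SigC a b c))⁻¹ * (αC a b c)ᵀ)⁻¹) ∧
    (∀ a b c,
      αCbar a b c = ((Z₃ a b c)ᵀ * Z₃ a b c)⁻¹ * (Z₃ a b c)ᵀ * c) :=
  ruv2_and_ruv4_implies_ruv3_general Z₂ Z₃ αC αCbar SigC hruv2_Z3 hruv2_αC hruv2_SigC hruv2_reg
    hruv4_Z3 hruv4_αC hruv4_SigC hruv4_gls
end

section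
/- Importance-sampling consistency for location families: let y = h(θ) + e with h : ℝ^d → ℝ^d bijective and continuously differentiable with Jacobian determinant |J|, e having density f, and prior density g on θ absolutely continuous with respect to the distribution of h^{-1}(y − e). If e₁, e₂, … are i.i.d. copies of e, then for any bounded measurable u, the self-normalized estimator (Σ_{k≤K} u(h^{-1}(y−e_k)) g(h^{-1}(y−e_k))/|J(h^{-1}(y−e_k))|) / (Σ_{k≤K} g(h^{-1}(y−e_k))/|J(h^{-1}(y−e_k))|) converges in probability, as K → ∞, to the posterior expectation E[u(θ) | y] = ∫ u(z) g(z) f(y − h(z)) dz / ∫ g(z) f(y − h(z)) dz, provided the denominator integrals are finite and positive. -/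
open MeasureTheory Filter ProbabilityTheory Topology Finset

/-!
Writing `ν_f` for the law of the noise, the weight `w_q(x) = q(h⁻¹(y − x)) / |J(h⁻¹(y − x))|`
satisfies `∫ w_q dν_f = ∫ q(z) f(y − h(z)) dz` by the change of variables `x = y − h(z)`, whose
Jacobian determinant is `±J(z)`. The estimator is the ratio of the empirical means of
`w_{u g}(e_k)` and `w_g(e_k)`; by the strong law of large numbers both converge almost surely
to the two integrals of the posterior expectation, hence so does their ratio, and almost sure
convergence implies convergence in probability.
-/

section ChangeOfVariables

variable {E F : Type*} [NormedAddCommGroup E] [NormedSpace ℝ E] [FiniteDimensional ℝ E]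
  [MeasurableSpace E] [BorelSpace E] (μ : Measure E) [μ.IsAddHaarMeasure]
  [NormedAddCommGroup F] [NormedSpace ℝ F]

theorem integral_eq_integral_abs_det_fderiv_smul_of_equiv (φ : E ≃ E)
    {φ' : E → E →L[ℝ] E} (hφ' : ∀ x, HasFDerivAt φ (φ' x) x) (g : E → F) :
    ∫ x, g x ∂μ = ∫ x, |(φ' x).det| • g (φ x) ∂μ := by
  simpa [Set.image_univ_of_surjective φ.surjective] using
    integral_image_eq_integral_abs_det_fderiv_smul μ MeasurableSet.univ
      (fun x _ => (hφ' x).hasFDerivWithinAt) φ.injective.injOn g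

omit [MeasurableSpace E] [BorelSpace E] in
theorem abs_det_neg (A : E →L[ℝ] E) : |(-A).det| = |A.det| := by
  rw [ContinuousLinearMap.det, ContinuousLinearMap.toLinearMap_neg,
    ← neg_one_smul ℝ (A : E →ₗ[ℝ] E), LinearMap.det_smul, abs_mul, abs_pow, abs_neg, abs_one,
    one_pow, one_mul]

theorem integral_withDensity_comp_symm_sub_div_abs_det (y : E) (h : E ≃ E)
    (hh : Differentiable ℝ h) (hdet : ∀ z, (fderiv ℝ h z).det ≠ 0) {f : E → ℝ}
    (hf_nonneg : ∀ x, 0 ≤ f x) (hf_meas : Measurable f) (q : E → ℝ) :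
    ∫ x, q (h.symm (y - x)) / |(fderiv ℝ h (h.symm (y - x))).det|
        ∂μ.withDensity (fun x => ENNReal.ofReal (f x))
      = ∫ z, q z * f (y - h z) ∂μ := by
  rw [integral_withDensity_eq_integral_toReal_smul hf_meas.ennreal_ofReal
      (ae_of_all _ fun _ => ENNReal.ofReal_lt_top),
    integral_eq_integral_abs_det_fderiv_smul_of_equiv μ (h.trans (Equiv.subLeft y))
      (fun z => ((hh z).hasFDerivAt).const_sub y)]
  refine integral_congr_ae (ae_of_all _ fun z => ?_)
  simp only [Equiv.trans_apply, Equiv.subLeft_apply, sub_sub_cancel, Equiv.symm_apply_apply,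
    abs_det_neg, ENNReal.toReal_ofReal (hf_nonneg _), smul_eq_mul]
  field_simp [abs_ne_zero.mpr (hdet z)]

end ChangeOfVariables

section StrongLaw

variable {Ω α : Type*} [MeasurableSpace Ω] [MeasurableSpace α] {P : Measure Ω}
  {ν : Measure α} {e : ℕ → Ω → α}

theorem ae_tendsto_sum_comp_div_of_iIndepFun (he_meas : ∀ k, Measurable (e k))
    (he_indep : iIndepFun e P) (he_law : ∀ k, P.map (e k) = ν) {φ : α → ℝ}
    (hφ : Measurable φ) (hφ_int : Integrable φ ν) :
    ∀ᵐ ω ∂P, Tendsto (fun n : ℕ => (∑ k ∈ range n, φ (e k ω)) / n) atTop (𝓝 (∫ x, φ x ∂ν)) := by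
  have hident : ∀ k, IdentDistrib (e k) (e 0) P P := fun k =>
    ⟨(he_meas k).aemeasurable, (he_meas 0).aemeasurable, by rw [he_law, he_law]⟩
  have hint : Integrable (φ ∘ e 0) P := by
    rw [← he_law 0] at hφ_int
    exact hφ_int.comp_measurable (he_meas 0)
  have hmean : ∫ ω, φ (e 0 ω) ∂P = ∫ x, φ x ∂ν := by
    rw [← he_law 0, integral_map (he_meas 0).aemeasurable hφ.aestronglyMeasurable]
  rw [← hmean]
  exact strong_law_ae_real (fun k ω => φ (e k ω)) hint
    (fun i j hij => (he_indep.indepFun hij).comp hφ hφ) (fun k => (hident k).comp hφ)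

theorem tendstoInMeasure_sum_comp_div_sum_comp_of_iIndepFun [IsFiniteMeasure P]
    (he_meas : ∀ k, Measurable (e k)) (he_indep : iIndepFun e P)
    (he_law : ∀ k, P.map (e k) = ν) {φ ψ : α → ℝ} (hφ : Measurable φ) (hψ : Measurable ψ)
    (hφ_int : Integrable φ ν) (hψ_int : Integrable ψ ν) (hψ_ne : ∫ x, ψ x ∂ν ≠ 0) :
    TendstoInMeasure P
      (fun K ω => (∑ k ∈ range K, φ (e k ω)) / ∑ k ∈ range K, ψ (e k ω)) atTop
      (fun _ => (∫ x, φ x ∂ν) / ∫ x, ψ x ∂ν) := by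
  refine tendstoInMeasure_of_tendsto_ae (fun K => Measurable.aestronglyMeasurable ?_) ?_
  · exact (Finset.measurable_sum _ fun k _ => hφ.comp (he_meas k)).div
      (Finset.measurable_sum _ fun k _ => hψ.comp (he_meas k))
  filter_upwards [ae_tendsto_sum_comp_div_of_iIndepFun he_meas he_indep he_law hφ hφ_int,
    ae_tendsto_sum_comp_div_of_iIndepFun he_meas he_indep he_law hψ hψ_int] with ω hφω hψω
  refine (hφω.div hψω hψ_ne).congr' ?_
  filter_upwards [eventually_ne_atTop 0] with K hK
  exact div_div_div_cancel_right₀ (Nat.cast_ne_zero.mpr hK) _ _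

end StrongLaw

theorem importance_sampling_consistency_general
    {d : ℕ} {Ω : Type*} [MeasurableSpace Ω] (P : Measure Ω) [IsProbabilityMeasure P]
    (y : Fin d → ℝ)
    (h : (Fin d → ℝ) ≃ (Fin d → ℝ)) (hC1 : ContDiff ℝ 1 ⇑h)
    (J : (Fin d → ℝ) → ℝ)
    (hJ : ∀ z, J z = LinearMap.det ((fderiv ℝ (⇑h) z).toLinearMap))
    (hJne : ∀ z, J z ≠ 0)
    (f g u : (Fin d → ℝ) → ℝ)
    (hf_nonneg : ∀ x, 0 ≤ f x) (hf_meas : Measurable f)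
    (hg_meas : Measurable g)
    (hu_meas : Measurable u)
    (e : ℕ → Ω → (Fin d → ℝ))
    (he_meas : ∀ k, Measurable (e k))
    (he_indep : ProbabilityTheory.iIndepFun e P)
    (he_law : ∀ k, Measure.map (e k) P
      = volume.withDensity (fun x => ENNReal.ofReal (f x)))
    (hpos_den : 0 < ∫ z, g z * f (y - h z))
    (hmom_den : Integrable
      (fun x => g (h.symm (y - x)) / |J (h.symm (y - x))|)
      (volume.withDensity (fun x => ENNReal.ofReal (f x))))
    (hmom_num : Integrable
      (fun x => u (h.symm (y - x)) * g (h.symm (y - x)) / |J (h.symm (y - x))|)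
      (volume.withDensity (fun x => ENNReal.ofReal (f x)))) :
    TendstoInMeasure P
      (fun K ω =>
        (∑ k ∈ Finset.range K,
            u (h.symm (y - e k ω)) * g (h.symm (y - e k ω)) / |J (h.symm (y - e k ω))|)
        / (∑ k ∈ Finset.range K,
            g (h.symm (y - e k ω)) / |J (h.symm (y - e k ω))|))
      atTop
      (fun _ => (∫ z, u z * g z * f (y - h z)) / (∫ z, g z * f (y - h z))) := by
  have hJ_eq : J = fun z => (fderiv ℝ h z).det := funext hJ
  have hsymm_meas : Measurable h.symm := fun s hs => by
    rw [← h.image_eq_preimage_symm]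
    exact ((hC1.continuous.measurableEmbedding h.injective).measurableSet_image).2 hs
  have hJ_meas : Measurable J := by
    rw [hJ_eq]
    exact (ContinuousLinearMap.continuous_det.comp (hC1.continuous_fderiv one_ne_zero)).measurable
  have hweight_meas (q : (Fin d → ℝ) → ℝ) (hq : Measurable q) :
      Measurable fun x => q (h.symm (y - x)) / |J (h.symm (y - x))| :=
    (hq.comp (hsymm_meas.comp (measurable_const.sub measurable_id))).div
      (hJ_meas.comp (hsymm_meas.comp (measurable_const.sub measurable_id))).abs
  have hmean (q : (Fin d → ℝ) → ℝ) :
      ∫ x, q (h.symm (y - x)) / |J (h.symm (y - x))|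
          ∂volume.withDensity (fun x => ENNReal.ofReal (f x))
        = ∫ z, q z * f (y - h z) := by
    rw [hJ_eq] at hJne ⊢
    exact integral_withDensity_comp_symm_sub_div_abs_det volume y h
      (hC1.differentiable one_ne_zero) hJne hf_nonneg hf_meas q
  rw [← hmean g] at hpos_den
  have hratio := tendstoInMeasure_sum_comp_div_sum_comp_of_iIndepFun he_meas he_indep he_law
    (hweight_meas (fun z => u z * g z) (hu_meas.mul hg_meas)) (hweight_meas g hg_meas)
    hmom_num hmom_den hpos_den.ne'
  rwa [hmean g, hmean fun z => u z * g z] at hratio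

/-- Importance-sampling consistency for location families: with `y = h(θ) + e`,
`h` a C¹ bijection with Jacobian determinant `J`, `e` having density `f`, prior
density `g` absolutely continuous w.r.t. the law of `h⁻¹(y − e)`, and i.i.d. copies
`e₁, e₂, …` of `e`, the self-normalized importance-sampling estimator of a bounded
measurable `u` converges in probability to the posterior expectation
`∫ u(z) g(z) f(y − h(z)) dz / ∫ g(z) f(y − h(z)) dz`. -/
theorem importance_sampling_consistency
    {d : ℕ} {Ω : Type*} [MeasurableSpace Ω] (P : Measure Ω) [IsProbabilityMeasure P]
    (y : Fin d → ℝ)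
    (h : (Fin d → ℝ) ≃ (Fin d → ℝ)) (hC1 : ContDiff ℝ 1 ⇑h)
    (J : (Fin d → ℝ) → ℝ)
    (hJ : ∀ z, J z = LinearMap.det ((fderiv ℝ (⇑h) z).toLinearMap))
    (hJne : ∀ z, J z ≠ 0)
    (f g u : (Fin d → ℝ) → ℝ)
    (hf_nonneg : ∀ x, 0 ≤ f x) (hf_meas : Measurable f) (hf_one : ∫ x, f x = 1)
    (hg_nonneg : ∀ x, 0 ≤ g x) (hg_meas : Measurable g)
    (hu_meas : Measurable u) (M : ℝ) (hu_bdd : ∀ x, |u x| ≤ M)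
    (e : ℕ → Ω → (Fin d → ℝ))
    (he_meas : ∀ k, Measurable (e k))
    (he_indep : ProbabilityTheory.iIndepFun e P)
    (he_law : ∀ k, Measure.map (e k) P
      = volume.withDensity (fun x => ENNReal.ofReal (f x)))
    (habs : volume.withDensity (fun x => ENNReal.ofReal (g x))
      ≪ Measure.map (fun x => h.symm (y - x))
          (volume.withDensity (fun x => ENNReal.ofReal (f x))))
    (hint_den : Integrable (fun z => g z * f (y - h z)) volume)
    (hpos_den : 0 < ∫ z, g z * f (y - h z))
    (hint_num : Integrable (fun z => u z * g z * f (y - h z)) volume)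
    (hmom_den : Integrable
      (fun x => g (h.symm (y - x)) / |J (h.symm (y - x))|)
      (volume.withDensity (fun x => ENNReal.ofReal (f x))))
    (hmom_num : Integrable
      (fun x => u (h.symm (y - x)) * g (h.symm (y - x)) / |J (h.symm (y - x))|)
      (volume.withDensity (fun x => ENNReal.ofReal (f x)))) :
    TendstoInMeasure P
      (fun K ω =>
        (∑ k ∈ Finset.range K,
            u (h.symm (y - e k ω)) * g (h.symm (y - e k ω)) / |J (h.symm (y - e k ω))|)
        / (∑ k ∈ Finset.range K,
            g (h.symm (y - e k ω)) / |J (h.symm (y - e k ω))|))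
      atTop
      (fun _ => (∫ z, u z * g z * f (y - h z)) / (∫ z, g z * f (y - h z))) :=
  importance_sampling_consistency_general P y h hC1 J hJ hJne f g u hf_nonneg hf_meas hg_meas
    hu_meas e he_meas he_indep he_law hpos_den hmom_den hmom_num
end
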